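/- arXiv:1711.09341 — 4 statements merged into one kernel-verified Lean document; each statement's English description precedes it below -/
import Mathlib

section
/- Let G and G' be graphs without isolated vertices, with G having no isolated edges (edges both of whose endpoints have degree 1). If g is a bijection from the edge set of G onto the edge set of G' such that for every vertex v of G there is a vertex v' of G' with g(S(v)) = S(v'), where S(v) denotes the set of edges incident to v, then g is induced by a graph isomorphism λ from G to G' (i.e., g maps each edge (u,v) to the edge (λ(u),λ(v))). -/
open SimpleGraph

universe u v

/-- A circuit of `G` is the edge set of a cycle of `G`. -/
def IsCircuit {V : Type u} (G : SimpleGraph V) (C : Set (Sym2 V)) : Prop :=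
  ∃ (x : V) (w : G.Walk x x), w.IsCycle ∧ C = {e | e ∈ w.edges}

/-- The set of vertices covered by a set of edges. -/
def circVerts {V : Type u} (C : Set (Sym2 V)) : Set V :=
  {x | ∃ e ∈ C, x ∈ e}

/-- A set of edges is independent if its edges are pairwise nonadjacent. -/
def IndepEdges {V : Type u} (A : Set (Sym2 V)) : Prop :=
  ∀ e₁ ∈ A, ∀ e₂ ∈ A, e₁ ≠ e₂ → ∀ x : V, x ∈ e₁ → x ∉ e₂

/-- 2-connected: connected, at least 3 vertices, and deleting any one vertex
leaves the graph connected. -/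
def TwoConnected {V : Type u} (G : SimpleGraph V) : Prop :=
  G.Connected ∧ (3 : Cardinal) ≤ Cardinal.mk V ∧
    ∀ x : V, (G.induce {x}ᶜ).Connected

/-- 3-connected: at least 4 vertices and deleting any two vertices leaves
the graph connected. -/
def ThreeConnected {V : Type u} (G : SimpleGraph V) : Prop :=
  (4 : Cardinal) ≤ Cardinal.mk V ∧
    ∀ x y : V, (G.induce ({x, y} : Set V)ᶜ).Connected

/-- k-connected: more than k vertices and deleting any set of fewer than k
vertices leaves the graph connected. -/
def KConnected {V : Type u} (k : ℕ) (G : SimpleGraph V) : Prop :=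
  (k : Cardinal) < Cardinal.mk V ∧
    ∀ s : Set V, s.Finite → Nat.card s < k → (G.induce sᶜ).Connected

/-- The image of a set of edges of `G` under an edge map `f`. -/
def mapEdges {V : Type u} {V' : Type v} (G : SimpleGraph V) (G' : SimpleGraph V')
    (f : G.edgeSet → G'.edgeSet) (C : Set (Sym2 V)) : Set (Sym2 V') :=
  {e' | ∃ e : G.edgeSet, (e : Sym2 V) ∈ C ∧ (f e : Sym2 V') = e'}

/-- The preimage of a set of edges of `G'` under an edge map `f`. -/
def preimEdges {V : Type u} {V' : Type v} (G : SimpleGraph V) (G' : SimpleGraph V')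
    (f : G.edgeSet → G'.edgeSet) (S : Set (Sym2 V')) : Set (Sym2 V) :=
  {e | ∃ he : e ∈ G.edgeSet, (f ⟨e, he⟩ : Sym2 V') ∈ S}

/-- A circuit injection from `G` onto `G'`: an injective, surjective map on
edges carrying every circuit of `G` to a circuit of `G'`, where `G'` has no
isolated vertices. -/
def IsCircuitInjection {V : Type u} {V' : Type v} (G : SimpleGraph V) (G' : SimpleGraph V')
    (f : G.edgeSet → G'.edgeSet) : Prop :=
  Function.Injective f ∧ Function.Surjective f ∧
    (∀ C : Set (Sym2 V), IsCircuit G C → IsCircuit G' (mapEdges G G' f C)) ∧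
    ∀ x : V', ∃ y : V', G'.Adj x y

/-- `G` contains a subgraph of type X with connectors `e₁`, `e₂`, `e₃`:
two vertex-disjoint circuits `CA`, `CB`, edges `e₁ = (a₁,b₁)`, `e₂ = (a₂,b₂)`,
and a path from `a₃` to `b₃` internally disjoint from both circuits, with
`a₁,a₂,a₃` distinct on `CA` and `b₁,b₂,b₃` distinct on `CB`, and `e₃` an edge
of the path. -/
def IsTypeXWith {V : Type u} (G : SimpleGraph V) (e₁ e₂ e₃ : Sym2 V) : Prop :=
  ∃ (a₁ a₂ a₃ b₁ b₂ b₃ : V) (CA CB : Set (Sym2 V)) (P : G.Walk a₃ b₃),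
    IsCircuit G CA ∧ IsCircuit G CB ∧
    Disjoint (circVerts CA) (circVerts CB) ∧
    a₁ ∈ circVerts CA ∧ a₂ ∈ circVerts CA ∧ a₃ ∈ circVerts CA ∧
    b₁ ∈ circVerts CB ∧ b₂ ∈ circVerts CB ∧ b₃ ∈ circVerts CB ∧
    a₁ ≠ a₂ ∧ a₁ ≠ a₃ ∧ a₂ ≠ a₃ ∧ b₁ ≠ b₂ ∧ b₁ ≠ b₃ ∧ b₂ ≠ b₃ ∧
    G.Adj a₁ b₁ ∧ G.Adj a₂ b₂ ∧ e₁ = s(a₁, b₁) ∧ e₂ = s(a₂, b₂) ∧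
    P.IsPath ∧
    (∀ x ∈ P.support, x ≠ a₃ → x ≠ b₃ → x ∉ circVerts CA ∪ circVerts CB) ∧
    e₃ ∈ P.edges

/-- `G` is (all of) a graph of type X with connectors `e₁`, `e₂`, `e₃`. -/
def IsTypeXGraph {V : Type u} (G : SimpleGraph V) (e₁ e₂ e₃ : Sym2 V) : Prop :=
  ∃ (a₁ a₂ a₃ b₁ b₂ b₃ : V) (CA CB : Set (Sym2 V)) (P : G.Walk a₃ b₃),
    IsCircuit G CA ∧ IsCircuit G CB ∧
    Disjoint (circVerts CA) (circVerts CB) ∧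
    a₁ ∈ circVerts CA ∧ a₂ ∈ circVerts CA ∧ a₃ ∈ circVerts CA ∧
    b₁ ∈ circVerts CB ∧ b₂ ∈ circVerts CB ∧ b₃ ∈ circVerts CB ∧
    a₁ ≠ a₂ ∧ a₁ ≠ a₃ ∧ a₂ ≠ a₃ ∧ b₁ ≠ b₂ ∧ b₁ ≠ b₃ ∧ b₂ ≠ b₃ ∧
    G.Adj a₁ b₁ ∧ G.Adj a₂ b₂ ∧ e₁ = s(a₁, b₁) ∧ e₂ = s(a₂, b₂) ∧
    P.IsPath ∧
    (∀ x ∈ P.support, x ≠ a₃ → x ≠ b₃ → x ∉ circVerts CA ∪ circVerts CB) ∧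
    e₃ ∈ P.edges ∧
    G.edgeSet = CA ∪ CB ∪ {e₁, e₂} ∪ {e | e ∈ P.edges}

/-- An edge bijection mapping stars onto stars is induced by a
graph isomorphism, provided neither graph has isolated vertices and `G` has
no isolated edges. -/
theorem statement0 {V : Type u} {V' : Type v} (G : SimpleGraph V) (G' : SimpleGraph V')
    (hV : ∀ x : V, ∃ y : V, G.Adj x y)
    (hV' : ∀ x : V', ∃ y : V', G'.Adj x y)
    (hNoIsoEdge : ∀ x y : V, G.Adj x y →
      ¬(G.neighborSet x = {y} ∧ G.neighborSet y = {x}))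
    (g : G.edgeSet → G'.edgeSet) (hg : Function.Bijective g)
    (hstar : ∀ x : V, ∃ x' : V',
      mapEdges G G' g (G.incidenceSet x) = G'.incidenceSet x') :
    ∃ φ : G ≃g G', ∀ e : G.edgeSet,
      (g e : Sym2 V') = Sym2.map φ (e : Sym2 V) := by
  classical
  set lam : V → V' := fun x => (hstar x).choose with hlamdef
  have hlam : ∀ x, mapEdges G G' g (G.incidenceSet x) = G'.incidenceSet (lam x) :=
    fun x => (hstar x).choose_spec
  have hmem : ∀ (x : V) (e : G.edgeSet), (e : Sym2 V) ∈ G.incidenceSet x →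
      (g e : Sym2 V') ∈ G'.incidenceSet (lam x) := by
    intro x e he
    rw [← hlam x]
    exact ⟨e, he, rfl⟩
  have hmem' : ∀ (x : V) (e : G.edgeSet), (g e : Sym2 V') ∈ G'.incidenceSet (lam x) →
      (e : Sym2 V) ∈ G.incidenceSet x := by
    intro x e he
    rw [← hlam x] at he
    obtain ⟨f, hf, hgf⟩ := he
    have : f = e := hg.1 (Subtype.ext hgf)
    rwa [← this]
  have hinj : Function.Injective lam := by
    intro u v huv
    by_contra hne
    have hincuv : G.incidenceSet u = G.incidenceSet v := by
      ext e
      constructor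
      · intro he
        have heE : e ∈ G.edgeSet := G.incidenceSet_subset u he
        have h2 := hmem u ⟨e, heE⟩ he
        rw [huv] at h2
        exact hmem' v ⟨e, heE⟩ h2
      · intro he
        have heE : e ∈ G.edgeSet := G.incidenceSet_subset v he
        have h2 := hmem v ⟨e, heE⟩ he
        rw [← huv] at h2
        exact hmem' u ⟨e, heE⟩ h2
    obtain ⟨y, hy⟩ := hV u
    have h1 : s(u, y) ∈ G.incidenceSet u := G.mk'_mem_incidenceSet_left_iff.2 hy
    have h2 : s(u, y) ∈ G.incidenceSet v := hincuv ▸ h1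
    have hvmem : v ∈ s(u, y) := h2.2
    have hadj : G.Adj u v := by
      rcases Sym2.mem_iff.1 hvmem with h | h
      · exact absurd h.symm hne
      · exact h ▸ hy
    -- every edge at u is s(u,v)
    have hNu : G.neighborSet u = {v} := by
      ext t
      simp only [mem_neighborSet, Set.mem_singleton_iff]
      constructor
      · intro ht
        have : s(u, t) ∈ G.incidenceSet v := hincuv ▸ G.mk'_mem_incidenceSet_left_iff.2 ht
        have hv : v ∈ s(u, t) := this.2
        rcases Sym2.mem_iff.1 hv with h | h
        · exact absurd h.symm hne
        · exact h.symm
      · intro ht; exact ht ▸ hadj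
    have hNv : G.neighborSet v = {u} := by
      ext t
      simp only [mem_neighborSet, Set.mem_singleton_iff]
      constructor
      · intro ht
        have : s(v, t) ∈ G.incidenceSet u := hincuv.symm ▸ G.mk'_mem_incidenceSet_left_iff.2 ht
        have hu : u ∈ s(v, t) := this.2
        rcases Sym2.mem_iff.1 hu with h | h
        · exact absurd h hne
        · exact h.symm
      · intro ht; exact ht ▸ hadj.symm
    exact hNoIsoEdge u v hadj ⟨hNu, hNv⟩
  have hmap : ∀ (u v : V) (h : G.Adj u v),
      (g ⟨s(u, v), h⟩ : Sym2 V') = s(lam u, lam v) := by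
    intro u v h
    have h1 : (g ⟨s(u, v), h⟩ : Sym2 V') ∈ G'.incidenceSet (lam u) :=
      hmem u _ (G.mk'_mem_incidenceSet_left_iff.2 h)
    have h2 : (g ⟨s(u, v), h⟩ : Sym2 V') ∈ G'.incidenceSet (lam v) :=
      hmem v _ (G.mk'_mem_incidenceSet_right_iff.2 h)
    have hne : lam u ≠ lam v := fun hc => h.ne (hinj hc)
    exact G'.incidenceSet_inter_incidenceSet_subset hne ⟨h1, h2⟩
  have hadj' : ∀ u v : V, G.Adj u v → G'.Adj (lam u) (lam v) := by
    intro u v h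
    have := (g ⟨s(u, v), h⟩).2
    rwa [hmap u v h, mem_edgeSet] at this
  have hadjrev : ∀ u v : V, G'.Adj (lam u) (lam v) → G.Adj u v := by
    intro u v h
    obtain ⟨e, he⟩ := hg.2 ⟨s(lam u, lam v), h⟩
    have h1 : (g e : Sym2 V') ∈ G'.incidenceSet (lam u) := by
      rw [he]; exact G'.mk'_mem_incidenceSet_left_iff.2 h
    have h2 : (g e : Sym2 V') ∈ G'.incidenceSet (lam v) := by
      rw [he]; exact G'.mk'_mem_incidenceSet_right_iff.2 h
    have hu : u ∈ (e : Sym2 V) := (hmem' u e h1).2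
    have hv : v ∈ (e : Sym2 V) := (hmem' v e h2).2
    have hne : u ≠ v := fun hc => h.ne (hc ▸ rfl)
    exact G.adj_of_mem_incidenceSet hne ⟨e.2, hu⟩ ⟨e.2, hv⟩
  have hsurj : Function.Surjective lam := by
    intro w
    obtain ⟨y, hy⟩ := hV' w
    obtain ⟨e, he⟩ := hg.2 ⟨s(w, y), hy⟩
    obtain ⟨⟨u, vv⟩, huv⟩ := (e : Sym2 V).exists_rep
    have hadjuv : G.Adj u vv := by
      have := e.2; rw [← huv, mem_edgeSet] at this; exact this
    have hee : e = ⟨s(u, vv), hadjuv⟩ := Subtype.ext huv.symm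
    have : (g e : Sym2 V') = s(lam u, lam vv) := by rw [hee]; exact hmap u vv hadjuv
    rw [he] at this
    have hw : w ∈ s(lam u, lam vv) := this ▸ Sym2.mem_mk_left w y
    rcases Sym2.mem_iff.1 hw with h | h
    · exact ⟨u, h.symm⟩
    · exact ⟨vv, h.symm⟩
  refine ⟨⟨Equiv.ofBijective lam ⟨hinj, hsurj⟩, ?_⟩, ?_⟩
  · intro u v
    exact ⟨hadjrev u v, hadj' u v⟩
  · intro e
    obtain ⟨⟨u, vv⟩, huv⟩ := (e : Sym2 V).exists_rep
    have hadjuv : G.Adj u vv := by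
      have := e.2; rw [← huv, mem_edgeSet] at this; exact this
    have hee : e = ⟨s(u, vv), hadjuv⟩ := Subtype.ext huv.symm
    rw [hee]
    simp only [Sym2.map_pair_eq]
    exact hmap u vv hadjuv
end

section
/- Let a, b, c be three distinct vertices of a 2-connected graph G. Then there exists a circuit C containing a and b, and a path P from c to some vertex t on C with t different from a and b, such that no vertex of P other than t lies on C (where the degenerate case c = t with empty path P is allowed). -/
/-!
First find a cycle `w` through `a` and `b`, by induction on a walk from `a` to `b`: if a cycle
passes through `b` and a neighbour `x` of a new vertex `v`, a path from `v` to the cycle in `G - x`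
together with the edge `vx` and a suitable arc of the cycle gives a cycle through `v` and `b`.

Paths from `c` to `w` inside `G - a` and inside `G - b`, stopped at their first vertex on `w`,
prove the claim unless they end at `b` and at `a`. Call them `A` and `B`, and let `y` be the last
vertex of `A` that lies on `B`. Then an arc of `w` from `a` to `b`, followed by `A` back from `b`
to `y` and `B` from `y` to `a`, is a cycle through `a` and `b`, and `B` from `c` to `y` meets it
only at `y ∉ {a, b}`.
-/

open SimpleGraph

universe u v

namespace SimpleGraph.Walk

variable {V : Type*} {G : SimpleGraph V} {u v w x y : V}

lemma IsPath.start_notMem_support_tail {p : G.Walk u v} (hp : p.IsPath) :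
    u ∉ p.support.tail := by
  have := hp.support_nodup
  rw [← cons_tail_support, List.nodup_cons] at this
  exact this.1

lemma IsPath.append {p : G.Walk u v} {q : G.Walk v w} (hp : p.IsPath) (hq : q.IsPath)
    (hpq : ∀ z ∈ p.support, z ∈ q.support → z = v) : (p.append q).IsPath := by
  rw [isPath_def, support_append, List.nodup_append']
  exact ⟨hp.support_nodup, hq.support_nodup.sublist (List.tail_sublist _),
    fun z hzp hzq => hq.start_notMem_support_tail (hpq z hzp (List.mem_of_mem_tail hzq) ▸ hzq)⟩

lemma IsPath.isCycle_append_append {p : G.Walk u v} {q : G.Walk v w} {r : G.Walk w u}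
    (hp : p.IsPath) (hq : q.IsPath) (hr : r.IsPath) (hvw : v ≠ w) (hwu : w ≠ u)
    (hpq : ∀ z ∈ p.support, z ∈ q.support → z = v)
    (hqr : ∀ z ∈ q.support, z ∈ r.support → z = w)
    (hrp : ∀ z ∈ r.support, z ∈ p.support → z = u) :
    (p.append (q.append r)).IsCycle := by
  refine hp.isCycle_append (hq.append hr hqr) (fun z hzp hzqr => ?_) (Or.inr ?_)
  · rw [tail_support_append, List.mem_append] at hzqr
    rcases hzqr with hzq | hzr
    · have := hpq z (List.mem_of_mem_tail hzp) (List.mem_of_mem_tail hzq)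
      exact hq.start_notMem_support_tail (this ▸ hzq)
    · have := hrp z (List.mem_of_mem_tail hzr) (List.mem_of_mem_tail hzp)
      exact hp.start_notMem_support_tail (this ▸ hzp)
  · have hq0 : q.length ≠ 0 := fun h => hvw (eq_of_length_eq_zero h)
    have hr0 : r.length ≠ 0 := fun h => hwu (eq_of_length_eq_zero h)
    rw [length_append]
    omega

section Decomp

variable [DecidableEq V]

lemma IsPath.eq_of_mem_support_takeUntil_of_mem_support_dropUntil {p : G.Walk u v}
    (hp : p.IsPath) (hx : x ∈ p.support) (hy : y ∈ (p.takeUntil x hx).support)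
    (hy' : y ∈ (p.dropUntil x hx).support) : y = x := by
  have hnd := hp.support_nodup
  rw [← take_spec p hx, support_append, List.nodup_append'] at hnd
  rw [← cons_tail_support, List.mem_cons] at hy'
  exact hy'.resolve_right (hnd.2.2 hy)

lemma IsPath.exists_isPath_first_mem {p : G.Walk u v} (hp : p.IsPath) (s : Finset V)
    (hw : w ∈ s) (hwp : w ∈ p.support) :
    ∃ t ∈ s, ∃ q : G.Walk u t, q.IsPath ∧ q.support ⊆ p.support ∧
      ∀ z ∈ s, z ∈ q.support → z = t := by
  obtain ⟨t, hts, htp, hfirst⟩ :=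
    p.exists_mem_support_forall_mem_support_imp_eq s ⟨w, Finset.mem_filter.mpr ⟨hw, hwp⟩⟩
  exact ⟨t, hts, p.takeUntil t htp, hp.takeUntil htp, p.support_takeUntil_subset_support htp,
    hfirst⟩

lemma IsCycle.exists_isPath_mem_support {c : G.Walk u u} (hc : c.IsCycle)
    (hx : x ∈ c.support) (hv : v ∈ c.support) (hxv : x ≠ v) (hy : y ∈ c.support) :
    ∃ p : G.Walk x v, p.IsPath ∧ y ∈ p.support ∧ p.support ⊆ c.support := by
  set c' := c.rotate x hx
  have hc' : c'.IsCycle := hc.rotate hx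
  have hsub : c'.support ⊆ c.support := fun z hz => (mem_support_rotate_iff c x hx).mp hz
  have hv' : v ∈ c'.support := (mem_support_rotate_iff c x hx).mpr hv
  have hy' : y ∈ c'.support := (mem_support_rotate_iff c x hx).mpr hy
  rw [← take_spec c' hv', mem_support_append_iff] at hy'
  rcases hy' with hyT | hyD
  · exact ⟨c'.takeUntil v hv', hc'.isPath_takeUntil hv', hyT,
      fun z hz => hsub (c'.support_takeUntil_subset_support hv' hz)⟩
  · have hcyc : ((c'.dropUntil v hv').reverse.append (c'.takeUntil v hv').reverse).IsCycle := by
      rw [← reverse_append, take_spec]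
      exact hc'.reverse
    refine ⟨(c'.dropUntil v hv').reverse, hcyc.isPath_of_append_left ?_, ?_, ?_⟩
    · rw [nil_reverse]
      exact not_nil_of_ne hxv
    · rwa [support_reverse, List.mem_reverse]
    · intro z hz
      rw [support_reverse, List.mem_reverse] at hz
      exact hsub (c'.support_dropUntil_subset_support hv' hz)

end Decomp

end SimpleGraph.Walk

namespace SimpleGraph

variable {V : Type*} {G : SimpleGraph V} {u v x : V}

open Walk

lemma exists_isPath_notMem_support (hx : (G.induce {x}ᶜ).Connected) (hu : u ≠ x) (hv : v ≠ x) :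
    ∃ p : G.Walk u v, p.IsPath ∧ x ∉ p.support := by
  classical
  obtain ⟨q⟩ := hx.preconnected ⟨u, hu⟩ ⟨v, hv⟩
  let p : G.Walk u v := q.map (Embedding.induce {x}ᶜ).toHom
  refine ⟨p.bypass, p.bypass_isPath, fun h => ?_⟩
  obtain ⟨z, -, hz⟩ := List.mem_map.mp (Walk.support_map _ _ ▸ p.support_bypass_subset_support h)
  exact z.2 hz

lemma exists_isPath_first_mem_notMem_support [DecidableEq V] (hx : (G.induce {x}ᶜ).Connected)
    (s : Finset V) {w : V} (hu : u ≠ x) (hw : w ∈ s) (hwx : w ≠ x) :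
    ∃ t ∈ s, ∃ q : G.Walk u t, q.IsPath ∧ x ∉ q.support ∧ ∀ z ∈ s, z ∈ q.support → z = t := by
  obtain ⟨p, hp, hxp⟩ := exists_isPath_notMem_support hx hu hwx
  obtain ⟨t, hts, q, hq, hqp, hfirst⟩ := hp.exists_isPath_first_mem s hw p.end_mem_support
  exact ⟨t, hts, q, hq, fun h => hxp (hqp h), hfirst⟩

end SimpleGraph

namespace SimpleGraph.Walk

variable {V : Type*} {G : SimpleGraph V} {u v x y : V}

lemma IsCycle.exists_isCycle_mem_support_of_adj (hx : (G.induce {x}ᶜ).Connected)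
    {w : G.Walk u u} (hw : w.IsCycle) (hxw : x ∈ w.support) (hyw : y ∈ w.support) (hyx : y ≠ x)
    (hvx : G.Adj v x) (hvw : v ∉ w.support) :
    ∃ (u' : V) (c : G.Walk u' u'), c.IsCycle ∧ v ∈ c.support ∧ y ∈ c.support := by
  classical
  obtain ⟨t, htw, q, hq, hxq, hqw⟩ := exists_isPath_first_mem_notMem_support hx
    w.support.toFinset hvx.ne (List.mem_toFinset.mpr hyw) hyx
  rw [List.mem_toFinset] at htw
  have hxt : x ≠ t := fun h => hxq (h ▸ q.end_mem_support)
  obtain ⟨p, hp, hyp, hpw⟩ := hw.exists_isPath_mem_support hxw htw hxt hyw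
  refine ⟨v, hvx.toWalk.append (p.append q.reverse), ?_, start_mem_support _, ?_⟩
  · refine hvx.isPath_toWalk.isCycle_append_append hp hq.reverse hxt (fun h => hvw (h ▸ htw))
      ?_ ?_ ?_
    · simp only [Adj.support_toWalk, List.mem_cons, List.mem_nil_iff, or_false]
      rintro z (rfl | rfl) hzp
      exacts [absurd (hpw hzp) hvw, rfl]
    · intro z hzp hzq
      rw [support_reverse, List.mem_reverse] at hzq
      exact hqw z (List.mem_toFinset.mpr (hpw hzp)) hzq
    · simp only [Adj.support_toWalk, List.mem_cons, List.mem_nil_iff, or_false, support_reverse,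
        List.mem_reverse]
      rintro z hzq (rfl | rfl)
      exacts [rfl, absurd hzq hxq]
  · simp [hyp]

end SimpleGraph.Walk

open SimpleGraph Walk

namespace TwoConnected

variable {V : Type*} {G : SimpleGraph V} {a b : V}

lemma exists_adj_ne (h2 : TwoConnected G) (hab : a ≠ b) : ∃ a', G.Adj a a' ∧ a' ≠ b := by
  obtain ⟨z, hza, hzb⟩ := Cardinal.exists_ne_ne_of_three_le h2.2.1 a b
  obtain ⟨p, -, hbp⟩ := exists_isPath_notMem_support (h2.2.2 b) hab hzb
  exact ⟨p.snd, adj_snd (not_nil_of_ne hza.symm),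
    fun h => hbp (h ▸ p.getVert_mem_support 1)⟩

lemma exists_isCycle_of_adj (h2 : TwoConnected G) (hab : G.Adj a b) :
    ∃ (u : V) (c : G.Walk u u), c.IsCycle ∧ a ∈ c.support ∧ b ∈ c.support := by
  obtain ⟨a', haa', ha'b⟩ := h2.exists_adj_ne hab.ne
  obtain ⟨q, hq, haq⟩ := exists_isPath_notMem_support (h2.2.2 a) haa'.ne' hab.ne'
  refine ⟨a, haa'.toWalk.append (q.append hab.symm.toWalk), ?_, start_mem_support _, by simp⟩
  refine haa'.isPath_toWalk.isCycle_append_append hq hab.symm.isPath_toWalk ha'b hab.ne' ?_ ?_ ?_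
  · simp only [Adj.support_toWalk, List.mem_cons, List.mem_nil_iff, or_false]
    rintro z (rfl | rfl) hzq
    exacts [absurd hzq haq, rfl]
  · simp only [Adj.support_toWalk, List.mem_cons, List.mem_nil_iff, or_false]
    rintro z hzq (rfl | rfl)
    exacts [rfl, absurd hzq haq]
  · simp only [Adj.support_toWalk, List.mem_cons, List.mem_nil_iff, or_false]
    rintro z (rfl | rfl) (h | h)
    exacts [absurd h hab.ne', absurd h.symm ha'b, rfl, rfl]

lemma exists_isCycle_mem_support (h2 : TwoConnected G) (hab : a ≠ b) :
    ∃ (u : V) (c : G.Walk u u), c.IsCycle ∧ a ∈ c.support ∧ b ∈ c.support := by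
  obtain ⟨p⟩ := h2.1.preconnected a b
  induction p with
  | nil => exact absurd rfl hab
  | @cons a a₁ b haa₁ q ih =>
    obtain rfl | ha₁b := eq_or_ne a₁ b
    · exact h2.exists_isCycle_of_adj haa₁
    obtain ⟨u, w, hw, ha₁w, hbw⟩ := ih ha₁b
    by_cases haw : a ∈ w.support
    · exact ⟨u, w, hw, haw, hbw⟩
    · exact hw.exists_isCycle_mem_support_of_adj (h2.2.2 a₁) ha₁w hbw ha₁b.symm haa₁ haw

end TwoConnected

section CycleWithPath

variable {V : Type*} {G : SimpleGraph V}

def ExistsCycleWithPath (G : SimpleGraph V) (a b c : V) : Prop :=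
  ∃ (u t : V) (w : G.Walk u u) (P : G.Walk c t), w.IsCycle ∧ a ∈ w.support ∧ b ∈ w.support ∧
    t ∈ w.support ∧ t ≠ a ∧ t ≠ b ∧ P.IsPath ∧ ∀ z ∈ w.support, z ∈ P.support → z = t

lemma ExistsCycleWithPath.exists_circuit {a b c : V} (h : ExistsCycleWithPath G a b c) :
    ∃ (C : Set (Sym2 V)) (t : V) (P : G.Walk c t),
      IsCircuit G C ∧ a ∈ circVerts C ∧ b ∈ circVerts C ∧
      t ∈ circVerts C ∧ t ≠ a ∧ t ≠ b ∧ P.IsPath ∧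
      ∀ x ∈ P.support, x ≠ t → x ∉ circVerts C := by
  obtain ⟨u, t, w, P, hw, ha, hb, ht, hta, htb, hP, hPw⟩ := h
  have hverts : circVerts {e | e ∈ w.edges} = {z | z ∈ w.support} := by
    ext z
    exact (mem_support_iff_exists_mem_edges_of_not_nil hw.not_nil).symm
  refine ⟨{e | e ∈ w.edges}, t, P, ⟨u, w, hw, rfl⟩, ?_⟩
  simp only [hverts, Set.mem_ofPred_eq]
  exact ⟨ha, hb, ht, hta, htb, hP, fun z hzP hzt hzw => hzt (hPw z hzw hzP)⟩

lemma SimpleGraph.Walk.IsCycle.existsCycleWithPath_of_isPath [DecidableEq V] {u a b c : V}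
    {w : G.Walk u u} (hw : w.IsCycle) (haw : a ∈ w.support) (hbw : b ∈ w.support) (hab : a ≠ b)
    {A : G.Walk c b} (hA : A.IsPath) (haA : a ∉ A.support)
    (hAw : ∀ z ∈ w.support, z ∈ A.support → z = b)
    {B : G.Walk c a} (hB : B.IsPath) (hbB : b ∉ B.support)
    (hBw : ∀ z ∈ w.support, z ∈ B.support → z = a) :
    ExistsCycleWithPath G a b c := by
  obtain ⟨y, hyB, Q, hQ, hQA, hQB⟩ := hA.reverse.exists_isPath_first_mem B.support.toFinset
    (List.mem_toFinset.mpr B.start_mem_support) (by simp)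
  rw [List.mem_toFinset] at hyB
  have hQA' : Q.support ⊆ A.support := by simpa using hQA
  have hyb : y ≠ b := fun h => hbB (h ▸ hyB)
  have hya : y ≠ a := fun h => haA (h ▸ hQA' Q.end_mem_support)
  obtain ⟨arc, harc, -, harcw⟩ := hw.exists_isPath_mem_support haw hbw hab haw
  have hPB := B.support_takeUntil_subset_support hyB
  have hDB := B.support_dropUntil_subset_support hyB
  have hcyc : (arc.append (Q.append (B.dropUntil y hyB))).IsCycle := by
    refine harc.isCycle_append_append hQ (hB.dropUntil hyB) hyb.symm hya ?_ ?_ ?_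
    · exact fun z hz hzQ => hAw z (harcw hz) (hQA' hzQ)
    · exact fun z hzQ hzD => hQB z (List.mem_toFinset.mpr (hDB hzD)) hzQ
    · exact fun z hzD hz => hBw z (harcw hz) (hDB hzD)
  refine ⟨a, y, _, B.takeUntil y hyB, hcyc, start_mem_support _, ?_, ?_, hya, hyb,
    hB.takeUntil hyB, ?_⟩
  · simp [end_mem_support]
  · simp [end_mem_support]
  intro z hzC hzP
  rw [mem_support_append_iff, mem_support_append_iff] at hzC
  rcases hzC with hz | hz | hz
  · obtain rfl := hBw z (harcw hz) (hPB hzP)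
    exact hB.eq_of_mem_support_takeUntil_of_mem_support_dropUntil hyB hzP (end_mem_support _)
  · exact hQB z (List.mem_toFinset.mpr (hPB hzP)) hz
  · exact hB.eq_of_mem_support_takeUntil_of_mem_support_dropUntil hyB hzP hz

end CycleWithPath

/-- In a 2-connected graph, for distinct vertices `a`, `b`, `c`
there is a circuit through `a` and `b` and a path from `c` meeting the circuit
only in its endpoint `t ≠ a, b`. -/
theorem statement1 {V : Type u} (G : SimpleGraph V) (h2 : TwoConnected G)
    (a b c : V) (hab : a ≠ b) (hac : a ≠ c) (hbc : b ≠ c) :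
    ∃ (C : Set (Sym2 V)) (t : V) (P : G.Walk c t),
      IsCircuit G C ∧ a ∈ circVerts C ∧ b ∈ circVerts C ∧
      t ∈ circVerts C ∧ t ≠ a ∧ t ≠ b ∧ P.IsPath ∧
      ∀ x ∈ P.support, x ≠ t → x ∉ circVerts C := by
  classical
  refine ExistsCycleWithPath.exists_circuit ?_
  obtain ⟨u, w, hw, haw, hbw⟩ := h2.exists_isCycle_mem_support hab
  -- if `c` lies on `w`, the first hit is `c` itself and `A` is trivial
  obtain ⟨t, htw, A, hA, haA, hAw⟩ := exists_isPath_first_mem_notMem_support (h2.2.2 a)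
    w.support.toFinset hac.symm (List.mem_toFinset.mpr hbw) hab.symm
  simp only [List.mem_toFinset] at htw hAw
  rcases ne_or_eq b t with hbt | rfl
  · exact ⟨u, t, w, A, hw, haw, hbw, htw, fun h => haA (h ▸ A.end_mem_support), hbt.symm, hA, hAw⟩
  obtain ⟨t, htw, B, hB, hbB, hBw⟩ := exists_isPath_first_mem_notMem_support (h2.2.2 b)
    w.support.toFinset hbc.symm (List.mem_toFinset.mpr haw) hab
  simp only [List.mem_toFinset] at htw hBw
  rcases ne_or_eq a t with hat | rfl
  · exact ⟨u, t, w, B, hw, haw, hbw, htw, hat.symm, fun h => hbB (h ▸ B.end_mem_support), hB, hBw⟩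
  exact hw.existsCycleWithPath_of_isPath haw hbw hab hA haA hAw hB hbB hBw
end

section
/- Let f be a circuit injection from a 3-connected graph G onto a graph G'. Then for every vertex w of G', the preimage f^{-1}(S(w)) of the star of w is either a star subgraph S(v) of G for some vertex v, or an independent set of edges of G. -/
open SimpleGraph

universe u v

/-!
A cycle of `G'` meets the star of `w` in zero or two edges. Since `f` is injective and maps
cycles onto cycles, every cycle of `G` meets `A = f⁻¹(S(w))` in zero or two edges.

Suppose two edges `vu`, `vt` of `A` share the vertex `v`. An edge `pq ∈ A` missing `v` would
lie on a `u`–`t` path avoiding `v`, which closes up with `vu` and `tv` into a cycle with three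
edges of `A`; hence `A ⊆ S(v)`. Such a path exists by Whitney's two-path theorem applied to `G`
with all edges at `v` except `vu`, `vt` removed, a 2-connected graph: two internally disjoint
`v`–`q` paths, one ending with the edge `pq`, leave `v` through `u` and through `t`. Conversely,
for an edge `vy`, a `y`–`t` path avoiding `v` closes up with `vy` and `tv` into a cycle whose only
other edge of `A` is `tv`, so `vy ∈ A`.
-/

namespace SimpleGraph

variable {V : Type*} {G : SimpleGraph V}

namespace Walk

lemma IsPath.append_of_support_inter {a b c : V} {p : G.Walk a b} {q : G.Walk b c}
    (hp : p.IsPath) (hq : q.IsPath) (h : ∀ y ∈ p.support, y ∈ q.support → y = b) :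
    (p.append q).IsPath := by
  rw [isPath_def, support_append]
  have hqnd := hq.support_nodup
  rw [← q.cons_tail_support, List.nodup_cons] at hqnd
  exact hp.support_nodup.append hqnd.2 fun y hyp hyq =>
    hqnd.1 (h y hyp (List.mem_of_mem_tail hyq) ▸ hyq)

lemma IsPath.countP_mem_edges_le [DecidableEq V] {a b w : V} {p : G.Walk a b}
    (hp : p.IsPath) : p.edges.countP (w ∈ ·) ≤ if w = a then 1 else 2 := by
  induction p with
  | nil => simp
  | @cons a c b h q ih =>
    obtain ⟨hq, haq⟩ := (cons_isPath_iff h q).mp hp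
    have ih := ih hq
    rw [edges_cons, List.countP_cons]
    by_cases hwa : w = a
    · subst hwa
      have : q.edges.countP (w ∈ ·) = 0 := List.countP_eq_zero.mpr fun e he hwe =>
        haq (mem_support_of_mem_edges he (by simpa using hwe))
      simp [this]
    · by_cases hwc : w = c
      · subst hwc
        simp only [hwa, if_true, if_false] at ih ⊢
        split_ifs <;> omega
      · simp [hwa, hwc, Sym2.mem_iff] at ih ⊢
        omega

lemma IsCycle.countP_mem_edges_eq_zero_or_two [DecidableEq V] {x w : V} {c : G.Walk x x}
    (hc : c.IsCycle) : c.edges.countP (w ∈ ·) = 0 ∨ c.edges.countP (w ∈ ·) = 2 := by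
  have heven : Even (c.edges.countP (w ∈ ·)) :=
    (hc.isTrail.even_countP_edges_iff w).mpr fun h => absurd rfl h
  suffices c.edges.countP (w ∈ ·) ≤ 2 by
    obtain ⟨k, hk⟩ := heven
    omega
  cases c with
  | nil => exact absurd hc (by simp [isCycle_def])
  | @cons _ y _ h q =>
    have hq := ((cons_isCycle_iff q h).mp hc).1
    rw [edges_cons, List.countP_cons]
    have hle := hq.countP_mem_edges_le (w := w)
    have hle' := hq.reverse.countP_mem_edges_le (w := w)
    rw [edges_reverse, List.countP_reverse] at hle'
    by_cases hwx : w = x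
    · subst hwx
      simp only [if_true] at hle'
      split_ifs <;> omega
    · by_cases hwy : w = y
      · subst hwy
        simp only [if_true] at hle
        split_ifs <;> omega
      · simp [hwx, hwy, Sym2.mem_iff] at hle ⊢
        omega

lemma IsPath.isCycle_cons_concat {v y t : V} {R : G.Walk y t} (hR : R.IsPath)
    (hv : v ∉ R.support) (hyt : y ≠ t) (hvy : G.Adj v y) (htv : G.Adj t v) :
    (cons hvy (R.concat htv)).IsCycle := by
  refine (cons_isCycle_iff _ hvy).mpr ⟨hR.concat hv htv, fun he => ?_⟩
  rw [edges_concat, List.concat_eq_append, List.mem_append, List.mem_singleton] at he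
  rcases he with he | he
  · exact hv (R.fst_mem_support_of_mem_edges he)
  · rcases Sym2.eq_iff.mp he with ⟨h, -⟩ | ⟨-, h⟩
    · exact htv.ne h.symm
    · exact hyt h

lemma exists_isPath_to_set {x y : V} (W : G.Walk x y) {S : Set V} (hy : y ∈ S) :
    ∃ z ∈ S, ∃ R : G.Walk x z, R.IsPath ∧ R.support ⊆ W.support ∧
      ∀ y ∈ R.support, y ∈ S → y = z := by
  classical
  suffices ∃ z ∈ S, ∃ R : G.Walk x z, R.support ⊆ W.support ∧
      ∀ y ∈ R.support, y ∈ S → y = z by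
    obtain ⟨z, hz, R, hRW, hRS⟩ := this
    exact ⟨z, hz, R.bypass, R.bypass_isPath,
      List.Subset.trans R.support_bypass_subset_support hRW,
      fun y hy => hRS y (R.support_bypass_subset_support hy)⟩
  induction W with
  | nil => exact ⟨_, hy, nil, by simp, by simp⟩
  | @cons x x' y h W ih =>
    by_cases hx : x ∈ S
    · exact ⟨x, hx, nil, by simp, by simp⟩
    obtain ⟨z, hz, R, hRW, hRS⟩ := ih hy
    refine ⟨z, hz, cons h R, ?_, ?_⟩
    · simpa [support_cons] using List.cons_subset_cons x hRW
    · intro y' hy' hy'S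
      rcases List.mem_cons.mp (by simpa [support_cons] using hy') with rfl | hy'
      · exact absurd hy'S hx
      · exact hRS y' hy' hy'S


def IsInternallyDisjoint {a b : V} (P Q : G.Walk a b) : Prop :=
  ∀ y ∈ P.support, y ∈ Q.support → y = a ∨ y = b

lemma IsInternallyDisjoint.symm {a b : V} {P Q : G.Walk a b} (h : P.IsInternallyDisjoint Q) :
    Q.IsInternallyDisjoint P :=
  fun y hQ hP => h y hP hQ

section

variable [DecidableEq V]

lemma IsInternallyDisjoint.extend_of_mem_left {a m b z : V} {P Q : G.Walk a m}
    (hP : P.IsPath) (hQ : Q.IsPath) (hPQ : P.IsInternallyDisjoint Q) (hmb : G.Adj m b)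
    (hba : b ≠ a) (hz : z ∈ P.support) {R : G.Walk b z} (hR : R.IsPath) (hmR : m ∉ R.support)
    (hRPQ : ∀ y ∈ R.support, y ∈ P.support ∨ y ∈ Q.support → y = z) :
    ∃ A₁ A₂ : G.Walk a b, A₁.IsPath ∧ A₂.IsPath ∧ A₁.IsInternallyDisjoint A₂ ∧
      s(m, b) ∈ A₂.edges := by
  have hzm : z ≠ m := fun h => hmR (h ▸ R.end_mem_support)
  have hmT : m ∉ (P.takeUntil z hz).support := endpoint_notMem_support_takeUntil hP hz hzm.symm
  have hbQ : b ∉ Q.support := fun hbQ => by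
    have hbz := hRPQ b R.start_mem_support (Or.inr hbQ)
    rcases hPQ b (hbz ▸ hz) hbQ with h | h
    · exact hba h
    · exact hmb.ne h.symm
  refine ⟨(P.takeUntil z hz).append R.reverse, Q.concat hmb,
    (hP.takeUntil hz).append_of_support_inter hR.reverse fun y hyT hyR => ?_,
    hQ.concat hbQ hmb, fun y hy₁ hy₂ => ?_, by simp [edges_concat]⟩
  · exact hRPQ y (by simpa using hyR) (Or.inl (P.support_takeUntil_subset_support hz hyT))
  rw [mem_support_append_iff, support_reverse, List.mem_reverse] at hy₁
  rw [support_concat, List.mem_append, List.mem_singleton] at hy₂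
  rcases hy₂ with hyQ | rfl
  · rcases hy₁ with hyT | hyR
    · rcases hPQ y (P.support_takeUntil_subset_support hz hyT) hyQ with rfl | rfl
      · exact Or.inl rfl
      · exact absurd hyT hmT
    · obtain rfl := hRPQ y hyR (Or.inr hyQ)
      rcases hPQ y hz hyQ with rfl | rfl
      · exact Or.inl rfl
      · exact absurd rfl hzm
  · exact Or.inr rfl

lemma IsInternallyDisjoint.extend {a m b : V} {P Q : G.Walk a m}
    (hP : P.IsPath) (hQ : Q.IsPath) (hPQ : P.IsInternallyDisjoint Q) (hmb : G.Adj m b)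
    (hba : b ≠ a) (W : G.Walk b a) (hmW : m ∉ W.support) :
    ∃ A₁ A₂ : G.Walk a b, A₁.IsPath ∧ A₂.IsPath ∧ A₁.IsInternallyDisjoint A₂ ∧
      s(m, b) ∈ A₂.edges := by
  obtain ⟨z, hz, R, hR, hRW, hRPQ⟩ :=
    W.exists_isPath_to_set (S := {y | y ∈ P.support ∨ y ∈ Q.support}) (Or.inl P.start_mem_support)
  have hmR : m ∉ R.support := fun h => hmW (hRW h)
  rcases hz with hz | hz
  · exact hPQ.extend_of_mem_left hP hQ hmb hba hz hR hmR hRPQ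
  · exact hPQ.symm.extend_of_mem_left hQ hP hmb hba hz hR hmR fun y hy h => hRPQ y hy h.symm

variable (hG : ∀ z x y : V, x ≠ z → y ≠ z → ∃ R : G.Walk x y, z ∉ R.support)
include hG

/-- Whitney's two-path theorem; `hG` expresses that `G` is 2-connected. -/
theorem exists_isInternallyDisjoint {a b : V} (W : G.Walk b a) (hba : b ≠ a) :
    ∃ P Q : G.Walk a b, P.IsPath ∧ Q.IsPath ∧ P.IsInternallyDisjoint Q := by
  induction W with
  | nil => exact absurd rfl hba
  | @cons x m a hxm W ih =>
    by_cases hma : m = a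
    · subst hma
      have hP : (cons hxm.symm nil).IsPath := by simp [hxm.ne']
      exact ⟨_, _, hP, hP, fun y hy _ => by simpa using hy⟩
    obtain ⟨P, Q, hP, hQ, hPQ⟩ := ih hma
    obtain ⟨R, hR⟩ := hG m x a hxm.ne (Ne.symm hma)
    obtain ⟨A₁, A₂, h₁, h₂, h, -⟩ := hPQ.extend hP hQ hxm.symm hba R hR
    exact ⟨A₁, A₂, h₁, h₂, h⟩

theorem exists_isInternallyDisjoint_mem_edges {a m b : V} (W : G.Walk m a) (hma : m ≠ a)
    (hmb : G.Adj m b) (hba : b ≠ a) :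
    ∃ A₁ A₂ : G.Walk a b, A₁.IsPath ∧ A₂.IsPath ∧ A₁.IsInternallyDisjoint A₂ ∧
      s(m, b) ∈ A₂.edges := by
  obtain ⟨P, Q, hP, hQ, hPQ⟩ := exists_isInternallyDisjoint hG W hma
  obtain ⟨R, hR⟩ := hG m b a hmb.ne.symm hma.symm
  exact hPQ.extend hP hQ hmb hba R hR

end

lemma IsInternallyDisjoint.exists_isPath_between_neighbors {v u t q : V}
    (hN : ∀ x, G.Adj v x → x = u ∨ x = t) {A₁ A₂ : G.Walk v q} (h₁ : A₁.IsPath)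
    (h₂ : A₂.IsPath) (hA : A₁.IsInternallyDisjoint A₂) {e : Sym2 V} (he : e ∈ A₂.edges)
    (hve : v ∉ e) : ∃ π : G.Walk u t, π.IsPath ∧ v ∉ π.support ∧ e ∈ π.edges := by
  rcases A₁ with _ | @⟨_, d₁, _, hd₁, B₁⟩
  · simp [edges_eq_nil.mpr (isPath_iff_nil.mp h₂)] at he
  rcases A₂ with _ | @⟨_, d₂, _, hd₂, B₂⟩
  · simp at he
  obtain ⟨hB₁, hvB₁⟩ := (cons_isPath_iff _ _).mp h₁
  obtain ⟨hB₂, hvB₂⟩ := (cons_isPath_iff _ _).mp h₂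
  have heB₂ : e ∈ B₂.edges := by
    rcases List.mem_cons.mp he with rfl | he
    · exact absurd (Sym2.mem_mk_left _ _) hve
    · exact he
  have hB : ∀ y ∈ B₁.support, y ∈ B₂.support → y = q := fun y hy₁ hy₂ =>
    (hA y (List.mem_cons_of_mem _ hy₁) (List.mem_cons_of_mem _ hy₂)).resolve_left
      fun hyv => hvB₁ (hyv ▸ hy₁)
  have hd : d₁ ≠ d₂ := by
    rintro rfl
    obtain rfl := hB d₁ B₁.start_mem_support B₂.start_mem_support
    simp [edges_eq_nil.mpr (isPath_iff_nil.mp hB₂)] at heB₂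
  have hπ : (B₁.append B₂.reverse).IsPath :=
    hB₁.append_of_support_inter hB₂.reverse fun y hy₁ hy₂ => hB y hy₁ (by simpa using hy₂)
  have hvπ : v ∉ (B₁.append B₂.reverse).support := by
    simp [mem_support_append_iff, hvB₁, hvB₂]
  have heπ : e ∈ (B₁.append B₂.reverse).edges := by simp [heB₂]
  rcases hN _ hd₁ with rfl | rfl <;> rcases hN _ hd₂ with rfl | rfl
  · exact absurd rfl hd
  · exact ⟨_, hπ, hvπ, heπ⟩
  · exact ⟨_, hπ.reverse, by simpa [and_comm] using hvπ, by simpa [or_comm] using heπ⟩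
  · exact absurd rfl hd

end Walk

def trimStar (G : SimpleGraph V) (v u t : V) : SimpleGraph V :=
  G.deleteEdges {e | v ∈ e ∧ e ≠ s(v, u) ∧ e ≠ s(v, t)}

variable {v u t : V}

lemma trimStar_le : G.trimStar v u t ≤ G := deleteEdges_le _

lemma mem_edgeSet_trimStar {e : Sym2 V} (he : e ∈ G.edgeSet) (hv : v ∉ e) :
    e ∈ (G.trimStar v u t).edgeSet := by
  simp [trimStar, edgeSet_deleteEdges, he, hv]

lemma trimStar_adj_of_eq_or_eq {x : V} (h : G.Adj v x) (hx : x = u ∨ x = t) :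
    (G.trimStar v u t).Adj v x := by
  rcases hx with rfl | rfl <;> simp [trimStar, h]

lemma eq_or_eq_of_trimStar_adj {x : V} (h : (G.trimStar v u t).Adj v x) : x = u ∨ x = t := by
  by_contra hx
  rw [not_or] at hx
  exact (deleteEdges_adj.mp h).2 ⟨Sym2.mem_mk_left _ _,
    fun h' => hx.1 (Sym2.congr_right.mp h'), fun h' => hx.2 (Sym2.congr_right.mp h')⟩

end SimpleGraph

open Classical in
def SimpleGraph.CycleMeetsZeroOrTwo {V : Type*} (G : SimpleGraph V) (A : Set (Sym2 V)) : Prop :=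
  ∀ ⦃x : V⦄ (c : G.Walk x x), c.IsCycle →
    c.edges.countP (· ∈ A) = 0 ∨ c.edges.countP (· ∈ A) = 2

lemma cycleMeetsZeroOrTwo_preimEdges_incidenceSet {V V' : Type*} {G : SimpleGraph V}
    {G' : SimpleGraph V'} {f : G.edgeSet → G'.edgeSet} (hinj : Function.Injective f)
    (hcirc : ∀ C, IsCircuit G C → IsCircuit G' (mapEdges G G' f C)) (w : V') :
    G.CycleMeetsZeroOrTwo (preimEdges G G' f (G'.incidenceSet w)) := by
  classical
  intro x c hc
  obtain ⟨x', c', hc', hC⟩ := hcirc _ ⟨x, c, hc, rfl⟩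
  let F : Sym2 V → Sym2 V' := fun e => if he : e ∈ G.edgeSet then f ⟨e, he⟩ else s(w, w)
  have hF : ∀ e (he : e ∈ G.edgeSet), F e = f ⟨e, he⟩ := fun e he => dif_pos he
  have hperm : (c.edges.map F).Perm c'.edges := by
    refine (List.perm_ext_iff_of_nodup ?_ hc'.edges_nodup).mpr fun e' => ?_
    · refine hc.edges_nodup.map_on fun e₁ h₁ e₂ h₂ h => ?_
      rw [hF _ (c.edges_subset_edgeSet h₁), hF _ (c.edges_subset_edgeSet h₂)] at h
      exact congrArg Subtype.val (hinj (Subtype.ext h))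
    · have : e' ∈ c'.edges ↔ e' ∈ mapEdges G G' f {e | e ∈ c.edges} := by rw [hC]; rfl
      rw [this, List.mem_map]
      constructor
      · rintro ⟨e, he, rfl⟩
        exact ⟨⟨e, c.edges_subset_edgeSet he⟩, he, (hF _ _).symm⟩
      · rintro ⟨e, he, rfl⟩
        exact ⟨e, he, hF _ _⟩
  have hcount : c.edges.countP (· ∈ preimEdges G G' f (G'.incidenceSet w)) =
      c'.edges.countP (w ∈ ·) := by
    rw [← hperm.countP_eq, List.countP_map]
    refine List.countP_congr fun e he => ?_
    simp [preimEdges, incidenceSet, hF _ (c.edges_subset_edgeSet he), c.edges_subset_edgeSet he,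
      (f _).2]
  rw [hcount]
  exact hc'.countP_mem_edges_eq_zero_or_two

namespace ThreeConnected

variable {V : Type*} {G : SimpleGraph V} (h3 : ThreeConnected G)
include h3

lemma exists_isPath_avoiding {x y z₁ z₂ : V} (hx₁ : x ≠ z₁) (hx₂ : x ≠ z₂) (hy₁ : y ≠ z₁)
    (hy₂ : y ≠ z₂) : ∃ R : G.Walk x y, R.IsPath ∧ z₁ ∉ R.support ∧ z₂ ∉ R.support := by
  classical
  obtain ⟨W⟩ := (h3.2 z₁ z₂).preconnected ⟨x, by simp [hx₁, hx₂]⟩ ⟨y, by simp [hy₁, hy₂]⟩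
  have hW : ∀ z ∈ (W.map (Embedding.induce _).toHom).bypass.support, z ≠ z₁ ∧ z ≠ z₂ := by
    intro z hz
    have hz' := Walk.support_bypass_subset_support _ hz
    rw [Walk.support_map, List.mem_map] at hz'
    obtain ⟨z', -, rfl⟩ := hz'
    exact not_or.mp z'.2
  exact ⟨_, Walk.bypass_isPath _, fun h => (hW _ h).1 rfl, fun h => (hW _ h).2 rfl⟩

section

variable {v u t : V} (hvu : G.Adj v u) (hvt : G.Adj v t) (hut : u ≠ t)
include hvu hvt hut

lemma trimStar_exists_walk_avoiding (z x y : V) (hx : x ≠ z) (hy : y ≠ z) :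
    ∃ R : (G.trimStar v u t).Walk x y, z ∉ R.support := by
  have entry : ∀ x, x ≠ z → ∃ x', x' ≠ v ∧ x' ≠ z ∧
      ∃ R : (G.trimStar v u t).Walk x x', z ∉ R.support := by
    intro x hx
    by_cases hxv : x = v
    · subst hxv
      by_cases huz : u = z
      · subst huz
        exact ⟨t, hvt.ne', hut.symm,
          .cons (trimStar_adj_of_eq_or_eq hvt (Or.inr rfl)) .nil, by simp [hx.symm, hut]⟩
      · exact ⟨u, hvu.ne', huz,
          .cons (trimStar_adj_of_eq_or_eq hvu (Or.inl rfl)) .nil, by simp [hx.symm, Ne.symm huz]⟩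
    · exact ⟨x, hxv, hx, .nil, by simpa using hx.symm⟩
  obtain ⟨x', hx'v, hx'z, X, hX⟩ := entry x hx
  obtain ⟨y', hy'v, hy'z, Y, hY⟩ := entry y hy
  obtain ⟨R, -, hRv, hRz⟩ := h3.exists_isPath_avoiding hx'v hx'z hy'v hy'z
  let R' := R.transfer (G.trimStar v u t) fun e he =>
    mem_edgeSet_trimStar (R.edges_subset_edgeSet he) fun hve =>
      hRv (Walk.mem_support_of_mem_edges he hve)
  exact ⟨X.append (R'.append Y.reverse), by
    simp [R', Walk.mem_support_append_iff, Walk.support_transfer, hX, hY, hRz]⟩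

theorem exists_isPath_avoiding_mem_edges {p q : V} (hpq : G.Adj p q) (hpv : p ≠ v)
    (hqv : q ≠ v) : ∃ π : G.Walk u t, π.IsPath ∧ v ∉ π.support ∧ s(p, q) ∈ π.edges := by
  classical
  have hH := h3.trimStar_exists_walk_avoiding hvu hvt hut
  obtain ⟨W, -⟩ := hH q p v hpq.ne hqv.symm
  have hvpq : v ∉ s(p, q) := by simp [hpv.symm, hqv.symm]
  have hpqH : (G.trimStar v u t).Adj p q := mem_edgeSet_trimStar (e := s(p, q)) hpq hvpq
  obtain ⟨A₁, A₂, h₁, h₂, hA, he⟩ :=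
    Walk.exists_isInternallyDisjoint_mem_edges hH W hpv hpqH hqv
  obtain ⟨π, hπ, hvπ, heπ⟩ :=
    hA.exists_isPath_between_neighbors (fun _ => eq_or_eq_of_trimStar_adj) h₁ h₂ he hvpq
  exact ⟨π.mapLe trimStar_le, hπ.mapLe _, by simpa using hvπ, by simpa using heπ⟩

end

variable {A : Set (Sym2 V)} (hA : G.CycleMeetsZeroOrTwo A)
include hA

section

variable {v t : V} (hvt : G.Adj v t) (ht : s(v, t) ∈ A)
include hvt ht

lemma forall_mem_of_cycleMeetsZeroOrTwo (hAG : A ⊆ G.edgeSet) {u : V} (hvu : G.Adj v u)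
    (hut : u ≠ t) (hu : s(v, u) ∈ A) : ∀ e ∈ A, v ∈ e := by
  classical
  intro e he
  by_contra hve
  induction e using Sym2.ind with
  | _ p q =>
    have hp : p ≠ v := fun h => hve (h ▸ Sym2.mem_mk_left p q)
    have hq : q ≠ v := fun h => hve (h ▸ Sym2.mem_mk_right p q)
    obtain ⟨π, hπ, hvπ, heπ⟩ := h3.exists_isPath_avoiding_mem_edges hvu hvt hut (hAG he) hp hq
    have hcount := hA _ (hπ.isCycle_cons_concat hvπ hut hvu hvt.symm)
    have hpos : 0 < π.edges.countP (· ∈ A) := List.countP_pos_iff.mpr ⟨_, heπ, by simpa using he⟩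
    rw [Walk.edges_cons, Walk.edges_concat, List.concat_eq_append, List.countP_cons,
      List.countP_append, List.countP_singleton, Sym2.eq_swap] at hcount
    simp only [hu, ht, decide_true, if_true] at hcount
    omega

lemma incidenceSet_subset_of_cycleMeetsZeroOrTwo (hsub : ∀ e ∈ A, v ∈ e) :
    G.incidenceSet v ⊆ A := by
  classical
  rintro e ⟨he, hve⟩
  obtain ⟨y, rfl⟩ : ∃ y, e = s(v, y) := ⟨_, (Sym2.other_spec hve).symm⟩
  rw [mem_edgeSet] at he
  by_cases hyt : y = t
  · exact hyt ▸ ht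
  obtain ⟨R, hR, hvR, -⟩ := h3.exists_isPath_avoiding he.ne' he.ne' hvt.ne' hvt.ne'
  have hcount := hA _ (hR.isCycle_cons_concat hvR hyt he hvt.symm)
  have hzero : R.edges.countP (· ∈ A) = 0 := List.countP_eq_zero.mpr fun e he' heA =>
    hvR (R.mem_support_of_mem_edges he' (hsub e (by simpa using heA)))
  rw [Walk.edges_cons, Walk.edges_concat, List.concat_eq_append, List.countP_cons,
    List.countP_append, List.countP_singleton, Sym2.eq_swap, hzero] at hcount
  by_contra hvy
  simp [hvy, ht] at hcount

end

theorem eq_incidenceSet_or_indepEdges (hAG : A ⊆ G.edgeSet) :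
    (∃ v, A = G.incidenceSet v) ∨ IndepEdges A := by
  refine or_iff_not_imp_right.mpr fun hind => ?_
  simp only [IndepEdges, not_forall, not_not, exists_prop] at hind
  obtain ⟨e₁, he₁, e₂, he₂, hne, v, hv₁, hv₂⟩ := hind
  obtain ⟨u, rfl⟩ : ∃ u, e₁ = s(v, u) := ⟨_, (Sym2.other_spec hv₁).symm⟩
  obtain ⟨t, rfl⟩ : ∃ t, e₂ = s(v, t) := ⟨_, (Sym2.other_spec hv₂).symm⟩
  have hut : u ≠ t := fun h => hne (h ▸ rfl)
  have hsub := h3.forall_mem_of_cycleMeetsZeroOrTwo hA (hAG he₂) he₂ hAG (hAG he₁) hut he₁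
  exact ⟨v, subset_antisymm (fun e he => ⟨hAG he, hsub e he⟩)
    (h3.incidenceSet_subset_of_cycleMeetsZeroOrTwo hA (hAG he₂) he₂ hsub)⟩

end ThreeConnected

/-- Under a circuit injection from a 3-connected graph, the
preimage of every star is a star or an independent set of edges. -/
theorem statement3 {V : Type u} {V' : Type v} (G : SimpleGraph V) (G' : SimpleGraph V')
    (h3 : ThreeConnected G) (f : G.edgeSet → G'.edgeSet)
    (hf : IsCircuitInjection G G' f) (w : V') :
    (∃ x : V, preimEdges G G' f (G'.incidenceSet w) = G.incidenceSet x) ∨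
      IndepEdges (preimEdges G G' f (G'.incidenceSet w)) :=
  h3.eq_incidenceSet_or_indepEdges (cycleMeetsZeroOrTwo_preimEdges_incidenceSet hf.1 hf.2.2.1 w)
    fun _ ⟨he, _⟩ => he
end

section
/- Let f be a circuit injection from a 2-connected graph G onto a graph G', and let S(v) be the star of a vertex v of G'. Then no edge e = (a,b) of f^{-1}(S(v)) can have both endpoints in the same connected component of G − f^{-1}(S(v)). -/
open SimpleGraph

universe u v

/-!
If `xy ∈ f⁻¹(S(v))` and `x, y` are joined by a path avoiding `f⁻¹(S(v))`, that path together with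
`xy` is a circuit of `G` meeting `f⁻¹(S(v))` in the single edge `xy`. Its image is then a circuit
of `G'` meeting the star `S(v)` in exactly one edge, whereas a circuit through `v` uses two edges
at `v`.
-/

namespace SimpleGraph

variable {V : Type u} {G : SimpleGraph V}

theorem Walk.IsCycle.exists_ne_mem_edges_of_mem {u : V} {c : G.Walk u u} (hc : c.IsCycle)
    {e : Sym2 V} (he : e ∈ c.edges) {v : V} (hv : v ∈ e) :
    ∃ e' ∈ c.edges, e' ≠ e ∧ v ∈ e' := by
  classical
  have hvc : v ∈ c.support := by
    obtain ⟨w, rfl⟩ := Sym2.mem_iff_exists.mp hv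
    exact c.fst_mem_support_of_mem_edges he
  set c' := c.rotate v hvc
  have hc' : c'.IsCycle := hc.rotate hvc
  have hmem : ∀ {e'}, e' ∈ c'.edges → e' ∈ c.edges := (c.rotate_edges v hvc).mem_iff.mp
  -- the first and the last edge of the cycle rotated to start at `v` both contain `v`
  have hne : s(v, c'.snd) ≠ s(c'.penultimate, v) := by
    rw [Sym2.eq_swap]
    exact fun h => hc'.snd_ne_penultimate (Sym2.congr_left.mp h)
  by_cases hfirst : s(v, c'.snd) = e
  · exact ⟨_, hmem (c'.mk_penultimate_end_mem_edges hc'.not_nil), hfirst ▸ hne.symm,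
      Sym2.mem_mk_right _ _⟩
  · exact ⟨_, hmem (c'.mk_start_snd_mem_edges hc'.not_nil), hfirst, Sym2.mem_mk_left _ _⟩

theorem exists_isCycle_of_reachable_deleteEdges {T : Set (Sym2 V)} {x y : V}
    (hxy : G.Adj x y) (hxyT : s(x, y) ∈ T) (h : (G.deleteEdges T).Reachable x y) :
    ∃ c : G.Walk y y, c.IsCycle ∧ s(x, y) ∈ c.edges ∧ ∀ e ∈ c.edges, e ∈ T → e = s(x, y) := by
  classical
  obtain ⟨p⟩ := h
  have hle : ∀ e ∈ p.toPath.1.edges, e ∈ G.edgeSet \ T := fun e he => by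
    simpa only [edgeSet_deleteEdges] using p.toPath.1.edges_subset_edgeSet he
  set q : G.Walk x y := p.toPath.1.transfer G fun e he => (hle e he).1
  have hqT : ∀ e ∈ q.edges, e ∉ T := by
    simpa only [q, Walk.edges_transfer] using fun e he => (hle e he).2
  refine ⟨.cons hxy.symm q, ?_, by simp [Sym2.eq_swap], ?_⟩
  · refine (q.cons_isCycle_iff hxy.symm).mpr ⟨p.toPath.2.transfer _, fun h => hqT _ h ?_⟩
    rwa [Sym2.eq_swap]
  · simp only [Walk.edges_cons, List.mem_cons]
    rintro e (rfl | he) heT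
    · exact Sym2.eq_swap
    · exact absurd heT (hqT e he)

end SimpleGraph

theorem IsCircuit.exists_ne_mem_of_mem {V : Type u} {G : SimpleGraph V} {C : Set (Sym2 V)}
    (hC : IsCircuit G C) {e : Sym2 V} (he : e ∈ C) {v : V} (hv : v ∈ e) :
    ∃ e' ∈ C, e' ≠ e ∧ v ∈ e' := by
  obtain ⟨_, c, hc, rfl⟩ := hC
  exact hc.exists_ne_mem_edges_of_mem he hv

theorem IsCircuit.exists_ne_mem_preimEdges_incidenceSet {V : Type u} {V' : Type v}
    {G : SimpleGraph V} {G' : SimpleGraph V'} {f : G.edgeSet → G'.edgeSet}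
    (hf : ∀ C : Set (Sym2 V), IsCircuit G C → IsCircuit G' (mapEdges G G' f C))
    {C : Set (Sym2 V)} (hC : IsCircuit G C) {v : V'} {e : Sym2 V} (he : e ∈ C)
    (heS : e ∈ preimEdges G G' f (G'.incidenceSet v)) :
    ∃ e' ∈ C, e' ≠ e ∧ e' ∈ preimEdges G G' f (G'.incidenceSet v) := by
  obtain ⟨heG, -, hv⟩ := heS
  obtain ⟨_, ⟨g, hgC, rfl⟩, hne, hvg⟩ := (hf C hC).exists_ne_mem_of_mem ⟨⟨e, heG⟩, he, rfl⟩ hv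
  refine ⟨g, hgC, fun hge => hne ?_, g.2, (f g).2, hvg⟩
  rw [show g = ⟨e, heG⟩ from Subtype.ext hge]

theorem statement5_general {V : Type u} {V' : Type v} (G : SimpleGraph V) (G' : SimpleGraph V')
    (f : G.edgeSet → G'.edgeSet)
    (hf : IsCircuitInjection G G' f) (v : V') :
    ∀ x y : V, s(x, y) ∈ preimEdges G G' f (G'.incidenceSet v) →
      ¬(G.deleteEdges (preimEdges G G' f (G'.incidenceSet v))).Reachable x y := by
  intro x y hxyS hreach
  obtain ⟨c, hc, hxyc, honly⟩ :=
    exists_isCycle_of_reachable_deleteEdges hxyS.1 hxyS hreach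
  obtain ⟨e, hec, hne, heS⟩ :=
    IsCircuit.exists_ne_mem_preimEdges_incidenceSet hf.2.2.1 ⟨y, c, hc, rfl⟩ hxyc hxyS
  exact hne (honly e hec heS)

/-- No edge of the preimage of a star has both endpoints in the
same component of the graph minus that preimage. -/
theorem statement5 {V : Type u} {V' : Type v} (G : SimpleGraph V) (G' : SimpleGraph V')
    (h2 : TwoConnected G) (f : G.edgeSet → G'.edgeSet)
    (hf : IsCircuitInjection G G' f) (v : V') :
    ∀ x y : V, s(x, y) ∈ preimEdges G G' f (G'.incidenceSet v) →
      ¬(G.deleteEdges (preimEdges G G' f (G'.incidenceSet v))).Reachable x y :=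
  statement5_general G G' f hf v
end
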